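/- For C > 0 let A*(C)² = (C + √(C²+4C))/2 and define ℓ(C) = ∫₀^{A*} A² dA / √((1+A²)(A*² − A²)(C·A*^{-2} + A²)). Then ℓ(C) → 0 as C → 0⁺ and ℓ(C) → π/2 as C → +∞. -/

import Mathlib

open Set Filter Real

noncomputable def Astar (C : ℝ) : ℝ :=
  Real.sqrt ((C + Real.sqrt (C ^ 2 + 4 * C)) / 2)

noncomputable def ellLen (C : ℝ) : ℝ :=
  ∫ A in (0:ℝ)..(Astar C),
    A ^ 2 / Real.sqrt ((1 + A ^ 2) * ((Astar C) ^ 2 - A ^ 2) * (C / (Astar C) ^ 2 + A ^ 2))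

open MeasureTheory Topology

/-!
Substituting `A = A* s` turns `ℓ(C)` into `∫₀¹ w(p, q, s) / √(1 - s²) ds` with `p = A*⁻²`,
`q = C A*⁻⁴` and `w(p, q, s) = s² / √((p + s²)(q + s²)) ∈ [0, 1]`. As `C → ∞`, `p, q → 0` and
`w → 1`, so dominated convergence gives `∫₀¹ ds / √(1 - s²) = arcsin 1 = π / 2`. As `C → 0⁺`,
`w ≤ s / √p = A* s`, so `0 ≤ ℓ(C) ≤ A* π / 2 → 0`.
-/

theorem hasDerivAt_arcsin_of_mem_Ioo {x : ℝ} (hx : x ∈ Ioo (-1) 1) :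
    HasDerivAt arcsin (1 / √(1 - x ^ 2)) x :=
  hasDerivAt_arcsin hx.1.ne' hx.2.ne

theorem intervalIntegrable_one_div_sqrt_one_sub_sq :
    IntervalIntegrable (fun s : ℝ ↦ 1 / √(1 - s ^ 2)) volume 0 1 :=
  intervalIntegral.intervalIntegrable_deriv_of_nonneg continuous_arcsin.continuousOn
    (fun x hx ↦ hasDerivAt_arcsin_of_mem_Ioo
      (Ioo_subset_Ioo (by norm_num : (-1 : ℝ) ≤ 0) le_rfl (by simpa using hx)))
    (fun _ _ ↦ by positivity)

theorem integral_one_div_sqrt_one_sub_sq : ∫ s in (0:ℝ)..1, 1 / √(1 - s ^ 2) = π / 2 := by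
  rw [intervalIntegral.integral_eq_sub_of_hasDerivAt_of_le zero_le_one
    continuous_arcsin.continuousOn
    (fun x hx ↦ hasDerivAt_arcsin_of_mem_Ioo ⟨by linarith [hx.1], hx.2⟩)
    intervalIntegrable_one_div_sqrt_one_sub_sq, arcsin_one, arcsin_zero, sub_zero]

noncomputable def ellWeight (p q s : ℝ) : ℝ := s ^ 2 / √((p + s ^ 2) * (q + s ^ 2))

section ellWeight

variable {p q : ℝ}

theorem ellWeight_nonneg (p q s : ℝ) : 0 ≤ ellWeight p q s := by
  unfold ellWeight; positivity

theorem ellWeight_le_one (hp : 0 ≤ p) (hq : 0 ≤ q) (s : ℝ) : ellWeight p q s ≤ 1 :=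
  div_le_one_of_le₀ (le_sqrt_of_sq_le (by nlinarith [sq_nonneg s])) (sqrt_nonneg _)

theorem ellWeight_le_abs_div_sqrt (hp : 0 < p) (hq : 0 ≤ q) (s : ℝ) :
    ellWeight p q s ≤ |s| / √p := by
  rcases eq_or_ne s 0 with rfl | hs
  · simp [ellWeight]
  have hden : √p * |s| ≤ √((p + s ^ 2) * (q + s ^ 2)) := by
    rw [← sqrt_sq_eq_abs, ← sqrt_mul hp.le]
    exact sqrt_le_sqrt (by nlinarith [sq_nonneg s])
  calc ellWeight p q s ≤ s ^ 2 / (√p * |s|) :=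
        div_le_div_of_nonneg_left (sq_nonneg s) (by positivity) hden
    _ = |s| / √p := by rw [← sq_abs]; field_simp

theorem tendsto_ellWeight {ι : Type*} {l : Filter ι} {p q : ι → ℝ}
    (hp : Tendsto p l (𝓝 0)) (hq : Tendsto q l (𝓝 0)) {s : ℝ} (hs : s ≠ 0) :
    Tendsto (fun i ↦ ellWeight (p i) (q i) s) l (𝓝 1) := by
  have hden := ((hp.add_const (s ^ 2)).mul (hq.add_const (s ^ 2))).sqrt
  rw [zero_add, sqrt_mul_self (sq_nonneg s)] at hden
  have h := (tendsto_const_nhds (x := s ^ 2)).div hden (pow_ne_zero 2 hs)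
  rwa [div_self (pow_ne_zero 2 hs)] at h

end ellWeight

noncomputable def normalizedEllLen (p q : ℝ) : ℝ :=
  ∫ s in (0:ℝ)..1, ellWeight p q s / √(1 - s ^ 2)

theorem aestronglyMeasurable_ellWeight_div (p q : ℝ) (μ : Measure ℝ) :
    AEStronglyMeasurable (fun s ↦ ellWeight p q s / √(1 - s ^ 2)) μ := by
  unfold ellWeight
  exact (by fun_prop : Measurable _).aestronglyMeasurable

theorem ellWeight_div_le {p q : ℝ} (hp : 0 ≤ p) (hq : 0 ≤ q) (s : ℝ) :
    ‖ellWeight p q s / √(1 - s ^ 2)‖ ≤ 1 / √(1 - s ^ 2) := by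
  rw [norm_of_nonneg (by positivity [ellWeight_nonneg p q s])]
  exact div_le_div_of_nonneg_right (ellWeight_le_one hp hq s) (sqrt_nonneg _)

theorem tendsto_normalizedEllLen {ι : Type*} {l : Filter ι} [l.IsCountablyGenerated]
    {p q : ι → ℝ} (hp : Tendsto p l (𝓝 0)) (hq : Tendsto q l (𝓝 0))
    (hp₀ : ∀ᶠ i in l, 0 ≤ p i) (hq₀ : ∀ᶠ i in l, 0 ≤ q i) :
    Tendsto (fun i ↦ normalizedEllLen (p i) (q i)) l (𝓝 (π / 2)) := by
  rw [← integral_one_div_sqrt_one_sub_sq]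
  refine intervalIntegral.tendsto_integral_filter_of_dominated_convergence _
    (.of_forall fun i ↦ aestronglyMeasurable_ellWeight_div _ _ _) ?_
    intervalIntegrable_one_div_sqrt_one_sub_sq (.of_forall fun s hs ↦ ?_)
  · filter_upwards [hp₀, hq₀] with i hpi hqi
    exact .of_forall fun s _ ↦ ellWeight_div_le hpi hqi s
  · rw [uIoc_of_le zero_le_one] at hs
    simpa using (tendsto_ellWeight hp hq hs.1.ne').div_const (√(1 - s ^ 2))

theorem normalizedEllLen_le {p q : ℝ} (hp : 0 < p) (hq : 0 ≤ q) :
    normalizedEllLen p q ≤ π / 2 / √p := by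
  have hle : ∀ s ∈ Icc (0:ℝ) 1,
      ellWeight p q s / √(1 - s ^ 2) ≤ 1 / √p * (1 / √(1 - s ^ 2)) := by
    intro s hs
    rw [div_eq_mul_one_div (ellWeight p q s)]
    gcongr
    calc ellWeight p q s ≤ |s| / √p := ellWeight_le_abs_div_sqrt hp hq s
      _ ≤ 1 / √p := by gcongr; rw [abs_of_nonneg hs.1]; exact hs.2
  have hint : IntervalIntegrable (fun s ↦ ellWeight p q s / √(1 - s ^ 2)) volume 0 1 :=
    intervalIntegrable_one_div_sqrt_one_sub_sq.mono_fun'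
      (aestronglyMeasurable_ellWeight_div _ _ _) (.of_forall (ellWeight_div_le hp.le hq))
  calc normalizedEllLen p q ≤ ∫ s in (0:ℝ)..1, 1 / √p * (1 / √(1 - s ^ 2)) :=
        intervalIntegral.integral_mono_on zero_le_one hint
          (intervalIntegrable_one_div_sqrt_one_sub_sq.const_mul _) hle
    _ = π / 2 / √p := by
        rw [intervalIntegral.integral_const_mul, integral_one_div_sqrt_one_sub_sq]; ring

theorem integral_eq_normalizedEllLen {a : ℝ} (ha : 0 < a) (c : ℝ) :
    ∫ A in (0:ℝ)..a, A ^ 2 / √((1 + A ^ 2) * (a ^ 2 - A ^ 2) * (c + A ^ 2)) =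
      normalizedEllLen (1 / a ^ 2) (c / a ^ 2) := by
  have hpoint : ∀ s ∈ uIcc (0:ℝ) 1,
      a * ((a * s) ^ 2 / √((1 + (a * s) ^ 2) * (a ^ 2 - (a * s) ^ 2) * (c + (a * s) ^ 2))) =
        ellWeight (1 / a ^ 2) (c / a ^ 2) s / √(1 - s ^ 2) := by
    intro s hs
    rw [uIcc_of_le zero_le_one] at hs
    have hfactor : (1 + (a * s) ^ 2) * (a ^ 2 - (a * s) ^ 2) * (c + (a * s) ^ 2) =
        (a ^ 3) ^ 2 * ((1 / a ^ 2 + s ^ 2) * (c / a ^ 2 + s ^ 2)) * (1 - s ^ 2) := by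
      field_simp
    rw [hfactor, sqrt_mul' _ (by nlinarith [hs.1, hs.2]), sqrt_mul (sq_nonneg _),
      sqrt_sq (by positivity), ellWeight]
    field_simp
  rw [normalizedEllLen, ← intervalIntegral.integral_congr hpoint,
    intervalIntegral.integral_const_mul, ← smul_eq_mul,
    intervalIntegral.smul_integral_comp_mul_left
      (fun A ↦ A ^ 2 / √((1 + A ^ 2) * (a ^ 2 - A ^ 2) * (c + A ^ 2))), mul_zero, mul_one]

theorem Astar_zero : Astar 0 = 0 := by
  simp [Astar]

theorem continuous_Astar : Continuous Astar := by
  unfold Astar; fun_prop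

theorem Astar_pos {C : ℝ} (hC : 0 < C) : 0 < Astar C :=
  sqrt_pos.2 (by positivity)

theorem le_Astar_sq {C : ℝ} (hC : 0 ≤ C) : C ≤ Astar C ^ 2 := by
  have hroot : C ≤ √(C ^ 2 + 4 * C) := le_sqrt_of_sq_le (by linarith)
  rw [Astar, sq_sqrt (by positivity)]
  linarith

theorem ellLen_nonneg (C : ℝ) : 0 ≤ ellLen C :=
  intervalIntegral.integral_nonneg (sqrt_nonneg _) fun _ _ ↦ by positivity

theorem ellLen_eq_normalizedEllLen {C : ℝ} (hC : 0 < C) :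
    ellLen C = normalizedEllLen (1 / Astar C ^ 2) (C / Astar C ^ 2 / Astar C ^ 2) :=
  integral_eq_normalizedEllLen (Astar_pos hC) _

theorem ellLen_le_mul_Astar {C : ℝ} (hC : 0 < C) : ellLen C ≤ π / 2 * Astar C := by
  have ha := Astar_pos hC
  calc ellLen C ≤ π / 2 / √(1 / Astar C ^ 2) :=
        ellLen_eq_normalizedEllLen hC ▸ normalizedEllLen_le (by positivity) (by positivity)
    _ = π / 2 * Astar C := by rw [sqrt_div' _ (sq_nonneg _), sqrt_sq ha.le]; simp

theorem tendsto_one_div_Astar_sq_atTop : Tendsto (fun C ↦ 1 / Astar C ^ 2) atTop (𝓝 0) := by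
  simp only [one_div]
  exact (tendsto_atTop_mono' _ (eventually_ge_atTop 0 |>.mono fun _ ↦ le_Astar_sq)
    tendsto_id).inv_tendsto_atTop

theorem tendsto_div_Astar_sq_div_Astar_sq_atTop :
    Tendsto (fun C ↦ C / Astar C ^ 2 / Astar C ^ 2) atTop (𝓝 0) := by
  refine tendsto_of_tendsto_of_tendsto_of_le_of_le' tendsto_const_nhds
    tendsto_one_div_Astar_sq_atTop ?_ ?_
  · filter_upwards [eventually_ge_atTop 0] with C hC using by positivity
  · filter_upwards [eventually_gt_atTop 0] with C hC
    gcongr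
    exact div_le_one_of_le₀ (le_Astar_sq hC.le) (sq_nonneg _)

theorem stmt_18 :
    Tendsto ellLen (nhdsWithin 0 (Ioi 0)) (nhds 0) ∧
    Tendsto ellLen atTop (nhds (π / 2)) := by
  constructor
  · have hA : Tendsto (fun C ↦ π / 2 * Astar C) (𝓝[>] 0) (𝓝 0) := by
      simpa [Astar_zero] using
        ((continuous_Astar.tendsto 0).mono_left nhdsWithin_le_nhds).const_mul (π / 2)
    refine tendsto_of_tendsto_of_tendsto_of_le_of_le' tendsto_const_nhds hA
      (.of_forall ellLen_nonneg) ?_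
    filter_upwards [self_mem_nhdsWithin] with C hC using ellLen_le_mul_Astar hC
  · refine (tendsto_normalizedEllLen tendsto_one_div_Astar_sq_atTop
      tendsto_div_Astar_sq_div_Astar_sq_atTop (.of_forall fun _ ↦ by positivity)
      ((eventually_ge_atTop 0).mono fun _ _ ↦ by positivity)).congr' ?_
    filter_upwards [eventually_gt_atTop 0] with C hC using (ellLen_eq_normalizedEllLen hC).symm
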